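/- arXiv:2502.11802 — 2 statements merged into one kernel-verified Lean document; each statement's English description precedes it below -/
import Mathlib

section
/- Let q > 2 and M ≥ 0, and let f : ℝ⁴ → ℝ be a measurable function such that for every ρ > 0, ∫_{{ρ < |x| < 2ρ}} |f(x)|^q dx ≤ M^q · ρ^{4−2q}. Then there exists a constant C > 0 depending only on q (and not on f or M) such that for every λ > 0, λ² · L({x ∈ ℝ⁴ : |f(x)| > λ}) ≤ C · M², i.e. f belongs to weak-L² of ℝ⁴ with weak-L² norm at most C^{1/2} M. -/
open MeasureTheory Filter Set ENNReal

noncomputable section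

/-!
Fix `R > 0` and cover `{|f| > λ}`, up to null spheres, by the ball of radius `R` and the dyadic
shells `R 2ⁿ < ‖x‖ < R 2ⁿ⁺¹`. The ball has measure `≍ R⁴`, and Chebyshev's inequality on
the `n`-th shell gives `M^q (R 2ⁿ)^(4-2q) / λ^q`, a geometric series in `n` because `q > 2`.
At `R = √(M/λ)` both contributions are `≍ M²/λ²`.
-/

open Metric Topology

def dyadicAnnulus {E : Type*} [Norm E] (ρ : ℝ) : Set E := {x | ρ < ‖x‖ ∧ ‖x‖ < 2 * ρ}

theorem measure_lt_abs_inter_le_setLIntegral_div {α : Type*} [MeasurableSpace α]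
    {μ : Measure α} {f : α → ℝ} (hf : Measurable f) (A : Set α) {q l : ℝ} (hq : 0 ≤ q)
    (hl : 0 < l) :
    μ ({x | l < |f x|} ∩ A) ≤
      (∫⁻ x in A, ENNReal.ofReal (|f x| ^ q) ∂μ) / ENNReal.ofReal (l ^ q) := by
  have hlq : 0 < l ^ q := Real.rpow_pos_of_pos hl q
  calc μ ({x | l < |f x|} ∩ A)
      ≤ μ.restrict A {x | ENNReal.ofReal (l ^ q) ≤ ENNReal.ofReal (|f x| ^ q)} :=
        (measure_mono (inter_subset_inter_left _ fun x hx =>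
          ENNReal.ofReal_le_ofReal (Real.rpow_le_rpow hl.le (le_of_lt hx) hq))).trans
          (Measure.le_restrict_apply _ _)
    _ ≤ _ := meas_ge_le_lintegral_div (hf.abs.pow_const q).ennreal_ofReal.aemeasurable
        (ENNReal.ofReal_pos.2 hlq).ne' ofReal_ne_top

section AddHaar

variable {E : Type*} [NormedAddCommGroup E] [NormedSpace ℝ E] [MeasurableSpace E] [BorelSpace E]
  [FiniteDimensional ℝ E] [Nontrivial E] (μ : Measure E) [μ.IsAddHaarMeasure]

theorem measure_le_ball_add_tsum_dyadicAnnulus (s : Set E) {R : ℝ} (hR : 0 < R) :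
    μ s ≤ μ (ball 0 R) + ∑' n : ℕ, μ (s ∩ dyadicAnnulus (R * 2 ^ n)) := by
  have hcover : s ⊆ (ball 0 R ∪ ⋃ n : ℕ, s ∩ dyadicAnnulus (R * 2 ^ n)) ∪
      ⋃ n : ℕ, sphere (0 : E) (R * 2 ^ n) := by
    intro x hx
    rcases lt_or_ge ‖x‖ R with hlt | hge
    · exact Or.inl (Or.inl (mem_ball_zero_iff.2 hlt))
    obtain ⟨n, hn, hn'⟩ := exists_nat_pow_near ((one_le_div hR).2 hge) one_lt_two
    rw [le_div_iff₀' hR] at hn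
    rw [div_lt_iff₀' hR, pow_succ] at hn'
    rcases hn.eq_or_lt with heq | hlt
    · exact Or.inr (mem_iUnion.2 ⟨n, mem_sphere_zero_iff_norm.2 heq.symm⟩)
    · exact Or.inl (Or.inr (mem_iUnion.2 ⟨n, hx, hlt, by linarith⟩))
  have hspheres : μ (⋃ n : ℕ, sphere (0 : E) (R * 2 ^ n)) = 0 :=
    measure_iUnion_null fun n => Measure.addHaar_sphere μ 0 _
  calc μ s ≤ μ (ball 0 R ∪ ⋃ n : ℕ, s ∩ dyadicAnnulus (R * 2 ^ n)) := by
        simpa only [hspheres, add_zero] using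
          (measure_mono hcover).trans (measure_union_le (μ := μ) _ _)
    _ ≤ _ := (measure_union_le _ _).trans (by gcongr; exact measure_iUnion_le _)

theorem measure_lt_abs_le_of_setLIntegral_dyadicAnnulus_le {f : E → ℝ} (hf : Measurable f)
    {q p K : ℝ} (hq : 0 ≤ q) (hp : p < 0) (hK : 0 ≤ K)
    (hbound : ∀ ρ : ℝ, 0 < ρ →
      ∫⁻ x in dyadicAnnulus ρ, ENNReal.ofReal (|f x| ^ q) ∂μ ≤ ENNReal.ofReal (K * ρ ^ p))
    {l R : ℝ} (hl : 0 < l) (hR : 0 < R) :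
    μ {x | l < |f x|} ≤
      μ (ball 0 R) + ENNReal.ofReal (K * R ^ p / l ^ q / (1 - 2 ^ p)) := by
  have hr0 : (0 : ℝ) ≤ 2 ^ p := by positivity
  have hr1 : (2 : ℝ) ^ p < 1 := Real.rpow_lt_one_of_one_lt_of_neg one_lt_two hp
  have hshell : ∀ n : ℕ, μ ({x | l < |f x|} ∩ dyadicAnnulus (R * 2 ^ n)) ≤
      ENNReal.ofReal (K * R ^ p / l ^ q * (2 ^ p) ^ n) := fun n =>
    calc μ ({x | l < |f x|} ∩ dyadicAnnulus (R * 2 ^ n))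
        ≤ (∫⁻ x in dyadicAnnulus (R * 2 ^ n), ENNReal.ofReal (|f x| ^ q) ∂μ) /
            ENNReal.ofReal (l ^ q) := measure_lt_abs_inter_le_setLIntegral_div hf _ hq hl
      _ ≤ ENNReal.ofReal (K * (R * 2 ^ n) ^ p) / ENNReal.ofReal (l ^ q) := by
          gcongr; exact hbound _ (by positivity)
      _ = ENNReal.ofReal (K * R ^ p / l ^ q * (2 ^ p) ^ n) := by
          rw [← ofReal_div_of_pos (Real.rpow_pos_of_pos hl q),
            Real.mul_rpow hR.le (by positivity), ← Real.rpow_pow_comm zero_le_two]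
          ring_nf
  have hgeom : ∑' n : ℕ, ENNReal.ofReal (K * R ^ p / l ^ q * (2 ^ p) ^ n) =
      ENNReal.ofReal (K * R ^ p / l ^ q / (1 - 2 ^ p)) := by
    rw [← ofReal_tsum_of_nonneg (fun n => by positivity)
        ((summable_geometric_of_lt_one hr0 hr1).mul_left _),
      tsum_mul_left, tsum_geometric_of_lt_one hr0 hr1, ← div_eq_mul_inv]
  calc μ {x | l < |f x|}
      ≤ μ (ball 0 R) + ∑' n : ℕ, μ ({x | l < |f x|} ∩ dyadicAnnulus (R * 2 ^ n)) :=
        measure_le_ball_add_tsum_dyadicAnnulus μ _ hR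
    _ ≤ μ (ball 0 R) + ∑' n : ℕ, ENNReal.ofReal (K * R ^ p / l ^ q * (2 ^ p) ^ n) := by
        gcongr with n; exact hshell n
    _ = _ := by rw [hgeom]

end AddHaar

theorem sq_mul_rpow_div_of_sq_eq_div {M l R : ℝ} (hM : 0 < M) (hl : 0 < l) (hR : 0 ≤ R)
    (hRsq : R ^ 2 = M / l) (q : ℝ) : l ^ 2 * (M ^ q * R ^ (4 - 2 * q) / l ^ q) = M ^ 2 := by
  have hRpow : R ^ (4 - 2 * q) = M ^ (2 - q) / l ^ (2 - q) := by
    rw [← Real.div_rpow hM.le hl.le, ← hRsq, ← Real.rpow_two, ← Real.rpow_mul hR]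
    ring_nf
  have hsplit : ∀ x : ℝ, 0 < x → x ^ q * x ^ (2 - q) = x ^ 2 := fun x hx => by
    rw [← Real.rpow_add hx, add_sub_cancel, Real.rpow_two]
  rw [hRpow, ← hsplit M hM, ← hsplit l hl]
  field_simp

theorem one_sub_two_rpow_pos {p : ℝ} (hp : p < 0) : 0 < 1 - (2 : ℝ) ^ p :=
  sub_pos.2 (Real.rpow_lt_one_of_one_lt_of_neg one_lt_two hp)

def weakL2Const (q : ℝ) : ℝ :=
  volume.real (ball (0 : EuclideanSpace ℝ (Fin 4)) 1) + (1 - 2 ^ (4 - 2 * q))⁻¹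

theorem weakL2Const_pos {q : ℝ} (hq : 2 < q) : 0 < weakL2Const q :=
  add_pos_of_nonneg_of_pos measureReal_nonneg (inv_pos.2 (one_sub_two_rpow_pos (by linarith)))

theorem sq_mul_volume_lt_abs_le_of_pos {q : ℝ} (hq : 2 < q) {M : ℝ} (hM : 0 < M)
    {f : EuclideanSpace ℝ (Fin 4) → ℝ} (hf : Measurable f)
    (hF : ∀ ρ : ℝ, 0 < ρ → ∫⁻ x in dyadicAnnulus ρ, ENNReal.ofReal (|f x| ^ q) ≤
      ENNReal.ofReal (M ^ q * ρ ^ (4 - 2 * q)))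
    {l : ℝ} (hl : 0 < l) :
    ENNReal.ofReal (l ^ 2) * volume {x | l < |f x|} ≤ ENNReal.ofReal (weakL2Const q * M ^ 2) := by
  obtain ⟨R, hR, hRsq⟩ : ∃ R : ℝ, 0 < R ∧ R ^ 2 = M / l :=
    ⟨√(M / l), Real.sqrt_pos.2 (div_pos hM hl), Real.sq_sqrt (div_pos hM hl).le⟩
  have hball : volume (ball (0 : EuclideanSpace ℝ (Fin 4)) R) =
      ENNReal.ofReal (R ^ 4 * volume.real (ball (0 : EuclideanSpace ℝ (Fin 4)) 1)) := by
    rw [Measure.addHaar_ball _ _ hR.le, finrank_euclideanSpace_fin,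
      ENNReal.ofReal_mul (by positivity), ofReal_measureReal]
  have hR4 : l ^ 2 * R ^ 4 = M ^ 2 := by
    rw [show R ^ 4 = (R ^ 2) ^ 2 by ring, hRsq]
    field_simp
  calc ENNReal.ofReal (l ^ 2) * volume {x | l < |f x|}
      ≤ ENNReal.ofReal (l ^ 2) * (volume (ball (0 : EuclideanSpace ℝ (Fin 4)) R) +
          ENNReal.ofReal (M ^ q * R ^ (4 - 2 * q) / l ^ q / (1 - 2 ^ (4 - 2 * q)))) := by
        gcongr
        exact measure_lt_abs_le_of_setLIntegral_dyadicAnnulus_le volume hf (by linarith)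
          (by linarith) (by positivity) hF hl hR
    _ = ENNReal.ofReal (weakL2Const q * M ^ 2) := by
        have hsub : 0 < 1 - (2 : ℝ) ^ (4 - 2 * q) := one_sub_two_rpow_pos (by linarith)
        rw [hball, ← ENNReal.ofReal_add (by positivity) (by positivity),
          ← ENNReal.ofReal_mul (by positivity)]
        congr 1
        have hshells : l ^ 2 * (M ^ q * R ^ (4 - 2 * q) / l ^ q / (1 - 2 ^ (4 - 2 * q))) =
            M ^ 2 / (1 - 2 ^ (4 - 2 * q)) := by
          rw [← sq_mul_rpow_div_of_sq_eq_div hM hl hR.le hRsq q]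
          ring
        rw [mul_add, ← mul_assoc, hR4, hshells, weakL2Const]
        ring

theorem dyadic_decay_weak_L2 (q : ℝ) (hq : 2 < q) :
    ∃ C : ℝ, 0 < C ∧
      ∀ M : ℝ, 0 ≤ M →
      ∀ f : EuclideanSpace ℝ (Fin 4) → ℝ, Measurable f →
        (∀ ρ : ℝ, 0 < ρ →
          (∫⁻ x in {x : EuclideanSpace ℝ (Fin 4) | ρ < ‖x‖ ∧ ‖x‖ < 2 * ρ},
              ENNReal.ofReal (|f x| ^ q)) ≤
            ENNReal.ofReal (M ^ q * ρ ^ (4 - 2 * q))) →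
        ∀ l : ℝ, 0 < l →
          ENNReal.ofReal (l ^ 2) *
              volume {x : EuclideanSpace ℝ (Fin 4) | l < |f x|} ≤
            ENNReal.ofReal (C * M ^ 2) := by
  refine ⟨weakL2Const q, weakL2Const_pos hq, fun M hM f hf hF l hl => ?_⟩
  -- The hypothesis weakens as `M` grows; passing to the limit from `M' > 0` also covers `M = 0`.
  have hlarger : ∀ M' ∈ Ioi M, ENNReal.ofReal (l ^ 2) * volume {x | l < |f x|} ≤
      ENNReal.ofReal (weakL2Const q * M' ^ 2) := fun M' hM' =>
    sq_mul_volume_lt_abs_le_of_pos hq (hM.trans_lt hM') hf (fun ρ hρ => (hF ρ hρ).trans <|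
      ENNReal.ofReal_le_ofReal <| by gcongr; exact hM'.le) hl
  have hcont : Tendsto (fun M' => ENNReal.ofReal (weakL2Const q * M' ^ 2)) (𝓝[>] M)
      (𝓝 (ENNReal.ofReal (weakL2Const q * M ^ 2))) :=
    ((ENNReal.continuous_ofReal.comp (continuous_const.mul (continuous_pow 2))).tendsto M
      ).mono_left nhdsWithin_le_nhds
  exact ge_of_tendsto hcont (eventually_nhdsWithin_of_forall hlarger)
end
end

section
/- For R ∈ (0,1) define τ_R : [0,∞) → ℝ by τ_R(t) = 0 for 0 ≤ t ≤ R², τ_R(t) = log(log(e t / R²)) / log(log(e/R)) for R² ≤ t ≤ R, and τ_R(t) = 1 for t ≥ R. Then τ_R is continuous and nondecreasing with 0 ≤ τ_R ≤ 1, and the following limits hold as R → 0⁺: (i) ∫_{R²}^{R} ( |τ_R''(t)|² + |τ_R'(t)/t|² ) t³ dt → 0; and (ii) ∫₀^∞ λ · ( L({x ∈ ℝ⁴ : R² < |x| < R and τ_R'(|x|) > λ}) )^{1/2} dλ → 0. (Here (i) says the second derivatives of x ↦ τ_R(|x|) tend to 0 in L²(B₁ ⊂ ℝ⁴), and the quantity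 in (ii) is comparable to the square of the Lorentz L^{4,2}(B₁) norm of the gradient of x ↦ τ_R(|x|).) -/
open MeasureTheory Filter Set ENNReal

noncomputable section

/-- The logarithmic cutoff function `τ_R`: it vanishes on `[0, R²]`, equals `1` on
`[R, ∞)`, and equals `log(log(e t / R²)) / log(log(e/R))` on `[R², R]`. -/
def tauR (R t : ℝ) : ℝ :=
  if t ≤ R ^ 2 then 0
  else if t ≤ R then
    Real.log (Real.log (Real.exp 1 * t / R ^ 2)) /
      Real.log (Real.log (Real.exp 1 / R))
  else 1

/-!
On `(R², R)` we have `τ_R = log L / c_R` with `L(t) = log(e t / R²) ≥ 1` (`logRatio`) and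
`c_R = log log(e/R)` (`scale`), so `τ_R'(t) = 1 / (c_R t L(t))`. Both quantities carry a factor
`1 / c_R² → 0` in front of integrals that stay bounded:

* `(|τ_R''|² + |τ_R'/t|²) t³ ≤ 5 / (c_R² t L²)`, and `1 / (t L²)` is the derivative of `-1 / L`,
  which increases by less than `1` on `[R², R]`;
* on the shell `R² eʲ ≤ |x| < R² eʲ⁺¹` we have `L ≥ j + 1`, hence
  `τ_R' ≤ λⱼ = 1 / (c_R R² eʲ (j + 1))`, and the shell has volume `≲ (R² eʲ⁺¹)⁴`. Cutting the
  level sets along the shells (`√·` is subadditive) bounds the integral in (ii) by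
  `∑ⱼ λⱼ² / 2 · (R² eʲ⁺¹)² ≲ c_R⁻² ∑ⱼ (j + 1)⁻²`.
-/

open Topology

local notation "ℝ⁴" => EuclideanSpace ℝ (Fin 4)

theorem ENNReal.rpow_tsum_le_tsum_rpow {ι : Type*} (f : ι → ℝ≥0∞) {p : ℝ} (hp₀ : 0 < p)
    (hp₁ : p ≤ 1) : (∑' i, f i) ^ p ≤ ∑' i, f i ^ p := by
  rw [← ENNReal.le_rpow_inv_iff hp₀]
  refine ENNReal.summable.tsum_le_of_sum_le fun s => ?_
  rw [ENNReal.le_rpow_inv_iff hp₀]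
  refine (Finset.le_sum_of_subadditive (· ^ p) (by simp [hp₀])
    (fun a b => ENNReal.rpow_add_le_add_rpow a b hp₀.le hp₁) s f).trans ?_
  exact ENNReal.sum_le_tsum s

theorem lintegral_Ioo_ofReal {a : ℝ} (ha : 0 ≤ a) :
    ∫⁻ l in Ioo 0 a, ENNReal.ofReal l = ENNReal.ofReal (a ^ 2 / 2) := by
  have hint : IntegrableOn (fun l : ℝ => l) (Ioo 0 a) :=
    continuous_id.integrableOn_Icc.mono_set Ioo_subset_Icc_self
  rw [← ofReal_integral_eq_lintegral_ofReal hint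
      ((ae_restrict_iff' measurableSet_Ioo).2 (ae_of_all _ fun l hl => hl.1.le)),
    ← integral_Ioc_eq_integral_Ioo, ← intervalIntegral.integral_of_le ha, integral_id]
  norm_num

/-- Layer-cake bound: on the piece `A j` only the levels `l < lam j` contribute. -/
theorem lintegral_ofReal_mul_measure_rpow_le_tsum {E : Type*} [MeasurableSpace E] (μ : Measure E)
    {p : ℝ} (hp₀ : 0 < p) (hp₁ : p ≤ 1) (S : ℝ → Set E) (A : ℕ → Set E) {lam : ℕ → ℝ}
    (hlam : ∀ j, 0 ≤ lam j) (hcover : ∀ l, S l ⊆ ⋃ j, A j)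
    (hdisj : ∀ l j, lam j ≤ l → Disjoint (S l) (A j)) :
    ∫⁻ l in Ioi 0, ENNReal.ofReal l * μ (S l) ^ p
      ≤ ∑' j, ENNReal.ofReal (lam j ^ 2 / 2) * μ (A j) ^ p := by
  have hpiece : ∀ l j, μ (S l ∩ A j) ^ p ≤ (Iio (lam j)).indicator (fun _ => μ (A j) ^ p) l := by
    intro l j
    by_cases hl : l < lam j
    · rw [indicator_of_mem (mem_Iio.2 hl)]
      exact ENNReal.rpow_le_rpow (measure_mono inter_subset_right) hp₀.le
    · rw [(hdisj l j (not_lt.1 hl)).inter_eq, measure_empty, ENNReal.zero_rpow_of_pos hp₀]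
      exact bot_le
  have hpointwise : ∀ l, ENNReal.ofReal l * μ (S l) ^ p
      ≤ ∑' j, (Iio (lam j)).indicator (fun l => ENNReal.ofReal l * μ (A j) ^ p) l := by
    intro l
    have hsplit : μ (S l) ≤ ∑' j, μ (S l ∩ A j) := by
      refine (measure_mono fun x hx => ?_).trans (measure_iUnion_le _)
      obtain ⟨j, hj⟩ := mem_iUnion.1 (hcover l hx)
      exact mem_iUnion.2 ⟨j, hx, hj⟩
    simp_rw [indicator_mul_right, ENNReal.tsum_mul_left]
    gcongr
    exact (ENNReal.rpow_le_rpow hsplit hp₀.le).trans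
      ((ENNReal.rpow_tsum_le_tsum_rpow _ hp₀ hp₁).trans (ENNReal.tsum_le_tsum (hpiece l)))
  calc ∫⁻ l in Ioi 0, ENNReal.ofReal l * μ (S l) ^ p
      ≤ ∫⁻ l in Ioi 0, ∑' j, (Iio (lam j)).indicator (fun l => ENNReal.ofReal l * μ (A j) ^ p) l :=
        lintegral_mono hpointwise
    _ = ∑' j, ∫⁻ l in Ioi 0 ∩ Iio (lam j), ENNReal.ofReal l * μ (A j) ^ p := by
        rw [lintegral_tsum fun j =>
          ((ENNReal.measurable_ofReal.mul_const _).indicator measurableSet_Iio).aemeasurable]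
        refine tsum_congr fun j => ?_
        rw [lintegral_indicator measurableSet_Iio, Measure.restrict_restrict measurableSet_Iio,
          inter_comm]
    _ = ∑' j, ENNReal.ofReal (lam j ^ 2 / 2) * μ (A j) ^ p := by
        refine tsum_congr fun j => ?_
        rw [Ioi_inter_Iio, lintegral_mul_const _ ENNReal.measurable_ofReal,
          lintegral_Ioo_ofReal (hlam j)]

namespace LogCutoff

def scale (R : ℝ) : ℝ := Real.log (Real.log (Real.exp 1 / R))

def logRatio (R t : ℝ) : ℝ := Real.log (Real.exp 1 * t / R ^ 2)

def profile (R t : ℝ) : ℝ := Real.log (logRatio R t) / scale R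

def shellRadius (R : ℝ) (j : ℕ) : ℝ := R ^ 2 * Real.exp 1 ^ j

def shell (R : ℝ) (j : ℕ) : Set ℝ⁴ := {x | shellRadius R j ≤ ‖x‖ ∧ ‖x‖ < shellRadius R (j + 1)}

variable {R t : ℝ}

lemma scale_pos (hR₀ : 0 < R) (hR₁ : R < 1) : 0 < scale R := by
  refine Real.log_pos ((Real.lt_log_iff_exp_lt (by positivity)).2 ((lt_div_iff₀ hR₀).2 ?_))
  exact mul_lt_of_lt_one_right (Real.exp_pos 1) hR₁

lemma tendsto_scale_atTop : Tendsto scale (𝓝[>] 0) atTop := by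
  refine Real.tendsto_log_atTop.comp (Real.tendsto_log_atTop.comp ?_)
  exact (tendsto_inv_nhdsGT_zero.const_mul_atTop (Real.exp_pos 1)).congr fun R =>
    (div_eq_mul_inv _ _).symm

lemma tendsto_div_scale_sq (a : ℝ) : Tendsto (fun R => a / scale R ^ 2) (𝓝[>] 0) (𝓝 0) :=
  tendsto_const_nhds.div_atTop ((tendsto_pow_atTop two_ne_zero).comp tendsto_scale_atTop)

lemma logRatio_shellRadius (hR : R ≠ 0) (j : ℕ) : logRatio R (shellRadius R j) = j + 1 := by
  rw [logRatio, shellRadius, show Real.exp 1 * (R ^ 2 * Real.exp 1 ^ j) / R ^ 2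
    = Real.exp 1 ^ (j + 1) by field_simp; ring, Real.log_pow, Real.log_exp]
  push_cast
  ring

lemma logRatio_sq (hR : R ≠ 0) : logRatio R (R ^ 2) = 1 := by
  simpa [shellRadius] using logRatio_shellRadius hR 0

lemma logRatio_self (hR : R ≠ 0) : logRatio R R = Real.log (Real.exp 1 / R) := by
  rw [logRatio]
  congr 1
  field_simp

lemma monotoneOn_logRatio (hR : R ≠ 0) : MonotoneOn (logRatio R) (Ioi 0) :=
  fun a (ha : 0 < a) _ _ hab => Real.log_le_log (by positivity) (by gcongr)

lemma one_le_logRatio (hR : R ≠ 0) (ht : R ^ 2 ≤ t) : 1 ≤ logRatio R t := by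
  have hR2 : 0 < R ^ 2 := by positivity
  simpa [logRatio_sq hR] using monotoneOn_logRatio hR hR2 (hR2.trans_le ht) ht

lemma profile_sq (hR : R ≠ 0) : profile R (R ^ 2) = 0 := by
  simp [profile, logRatio_sq hR]

lemma profile_self (hR₀ : 0 < R) (hR₁ : R < 1) : profile R R = 1 := by
  rw [profile, logRatio_self hR₀.ne']
  exact div_self (scale_pos hR₀ hR₁).ne'

lemma monotoneOn_profile (hR₀ : 0 < R) (hR₁ : R < 1) : MonotoneOn (profile R) (Ici (R ^ 2)) :=
  fun _ ha _ hb hab => div_le_div_of_nonneg_right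
    (Real.log_le_log (zero_lt_one.trans_le (one_le_logRatio hR₀.ne' ha))
      (monotoneOn_logRatio hR₀.ne' ((pow_pos hR₀ 2).trans_le ha) ((pow_pos hR₀ 2).trans_le hb)
        hab))
    (scale_pos hR₀ hR₁).le

lemma hasDerivAt_logRatio (hR : R ≠ 0) (ht : t ≠ 0) : HasDerivAt (logRatio R) t⁻¹ t := by
  exact ((((hasDerivAt_id' t).const_mul (Real.exp 1)).div_const (R ^ 2)).log
    (by simp [ht, hR, Real.exp_ne_zero])).congr_deriv (by field_simp)

lemma continuousOn_profile (hR : R ≠ 0) : ContinuousOn (profile R) (Ici (R ^ 2)) := by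
  intro t ht
  have ht₀ : t ≠ 0 := (lt_of_lt_of_le (by positivity) ht).ne'
  refine ContinuousAt.continuousWithinAt (ContinuousAt.div_const ?_ _)
  exact (hasDerivAt_logRatio hR ht₀).continuousAt.log
    (zero_lt_one.trans_le (one_le_logRatio hR ht)).ne'

lemma tauR_eq_IccExtend (hR₀ : 0 < R) (hR₁ : R < 1) :
    tauR R = IccExtend (sq_le hR₀.le hR₁.le)
      (fun s : Icc (R ^ 2) R => profile R s) := by
  funext t
  rw [tauR]
  split_ifs with h₁ h₂
  · rw [IccExtend_of_le_left _ _ h₁, profile_sq hR₀.ne']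
  · rw [IccExtend_of_mem _ _ ⟨(not_le.1 h₁).le, h₂⟩]
    rfl
  · rw [IccExtend_of_right_le _ _ (not_le.1 h₂).le, profile_self hR₀ hR₁]

lemma monotone_tauR (hR₀ : 0 < R) (hR₁ : R < 1) : Monotone (tauR R) := by
  rw [tauR_eq_IccExtend hR₀ hR₁]
  exact Monotone.IccExtend _ (((monotoneOn_profile hR₀ hR₁).mono Icc_subset_Ici_self).monotone)

lemma continuous_tauR (hR₀ : 0 < R) (hR₁ : R < 1) : Continuous (tauR R) := by
  rw [tauR_eq_IccExtend hR₀ hR₁]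
  exact Continuous.Icc_extend' ((continuousOn_profile hR₀.ne').comp_continuous
    continuous_subtype_val fun s => s.2.1)

lemma tauR_mem_Icc (hR₀ : 0 < R) (hR₁ : R < 1) (t : ℝ) : tauR R t ∈ Icc 0 1 := by
  obtain ⟨s, hs⟩ : tauR R t ∈ range fun s : Icc (R ^ 2) R => profile R s := by
    rw [tauR_eq_IccExtend hR₀ hR₁, ← IccExtend_range]
    exact mem_range_self t
  have hmono := monotoneOn_profile hR₀ hR₁
  rw [← hs, ← profile_sq hR₀.ne', ← profile_self hR₀ hR₁]
  exact ⟨hmono (mem_Ici.2 le_rfl) s.2.1 s.2.1, hmono s.2.1 (sq_le hR₀.le hR₁.le) s.2.2⟩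

lemma hasDerivAt_profile (hR : R ≠ 0) (ht : R ^ 2 < t) :
    HasDerivAt (profile R) (scale R * t * logRatio R t)⁻¹ t := by
  have ht₀ : t ≠ 0 := ((by positivity : 0 < R ^ 2).trans ht).ne'
  exact (((hasDerivAt_logRatio hR ht₀).log
    (zero_lt_one.trans_le (one_le_logRatio hR ht.le)).ne').div_const (scale R)).congr_deriv
    (by ring)

lemma deriv_tauR (hR : R ≠ 0) (ht : t ∈ Ioo (R ^ 2) R) :
    deriv (tauR R) t = (scale R * t * logRatio R t)⁻¹ := by
  have heq : tauR R =ᶠ[𝓝 t] profile R := eventually_of_mem (isOpen_Ioo.mem_nhds ht)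
    fun s hs => by rw [tauR, if_neg (not_le.2 hs.1), if_pos hs.2.le]; rfl
  rw [heq.deriv_eq, (hasDerivAt_profile hR ht.1).deriv]

lemma deriv_deriv_tauR (hR₀ : 0 < R) (hR₁ : R < 1) (ht : t ∈ Ioo (R ^ 2) R) :
    deriv (deriv (tauR R)) t
      = -(scale R * (logRatio R t + 1)) / (scale R * t * logRatio R t) ^ 2 := by
  have hR := hR₀.ne'
  have ht₀ : t ≠ 0 := ((by positivity : 0 < R ^ 2).trans ht.1).ne'
  have heq : deriv (tauR R) =ᶠ[𝓝 t] fun s => (scale R * s * logRatio R s)⁻¹ :=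
    eventually_of_mem (isOpen_Ioo.mem_nhds ht) fun s hs => deriv_tauR hR hs
  have hden : HasDerivAt (fun s => scale R * s * logRatio R s) (scale R * (logRatio R t + 1)) t :=
    (((hasDerivAt_id' t).const_mul (scale R)).mul (hasDerivAt_logRatio hR ht₀)).congr_deriv
      (by rw [mul_assoc _ t, mul_inv_cancel₀ ht₀]; ring)
  have hL : logRatio R t ≠ 0 := (zero_lt_one.trans_le (one_le_logRatio hR ht.1.le)).ne'
  rw [heq.deriv_eq]
  exact (hden.inv (by simp [(scale_pos hR₀ hR₁).ne', ht₀, hL])).deriv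

lemma hessian_integrand_le (hR₀ : 0 < R) (hR₁ : R < 1) (ht : t ∈ Ioo (R ^ 2) R) :
    (|deriv (deriv (tauR R)) t| ^ 2 + |deriv (tauR R) t / t| ^ 2) * t ^ 3
      ≤ 5 / scale R ^ 2 * (t⁻¹ / logRatio R t ^ 2) := by
  rw [deriv_deriv_tauR hR₀ hR₁ ht, deriv_tauR hR₀.ne' ht, sq_abs, sq_abs]
  have hL : 1 ≤ logRatio R t := one_le_logRatio hR₀.ne' ht.1.le
  have hc : 0 < scale R := scale_pos hR₀ hR₁
  have ht₀ : 0 < t := (pow_pos hR₀ 2).trans ht.1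
  set L := logRatio R t
  set c := scale R
  have hgap : 5 / c ^ 2 * (t⁻¹ / L ^ 2)
      - ((-(c * (L + 1)) / (c * t * L) ^ 2) ^ 2 + ((c * t * L)⁻¹ / t) ^ 2) * t ^ 3
      = (4 * L ^ 2 - (L + 1) ^ 2) / (c ^ 2 * t * L ^ 4) := by
    field_simp
    ring
  rw [← sub_nonneg, hgap]
  exact div_nonneg (by nlinarith) (by positivity)

lemma hasDerivAt_neg_inv_logRatio (hR : R ≠ 0) (ht : R ^ 2 ≤ t) :
    HasDerivAt (fun s => -(logRatio R s)⁻¹) (t⁻¹ / logRatio R t ^ 2) t := by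
  have ht₀ : t ≠ 0 := ((by positivity : 0 < R ^ 2).trans_le ht).ne'
  exact ((hasDerivAt_logRatio hR ht₀).inv
    (zero_lt_one.trans_le (one_le_logRatio hR ht)).ne').neg.congr_deriv (by ring)

lemma continuousOn_inv_div_logRatio_sq (hR : R ≠ 0) :
    ContinuousOn (fun t => t⁻¹ / logRatio R t ^ 2) (Ici (R ^ 2)) := by
  intro t ht
  have ht₀ : t ≠ 0 := ((by positivity : 0 < R ^ 2).trans_le ht).ne'
  exact ((continuousAt_inv₀ ht₀).div ((hasDerivAt_logRatio hR ht₀).continuousAt.pow 2)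
    (pow_ne_zero 2 (zero_lt_one.trans_le (one_le_logRatio hR ht)).ne')).continuousWithinAt

lemma integrableOn_inv_div_logRatio_sq (hR : R ≠ 0) :
    IntegrableOn (fun t => t⁻¹ / logRatio R t ^ 2) (Ioo (R ^ 2) R) :=
  (((continuousOn_inv_div_logRatio_sq hR).mono Icc_subset_Ici_self).integrableOn_Icc).mono_set
    Ioo_subset_Icc_self

lemma integral_inv_div_logRatio_sq (hR₀ : 0 < R) (hR₁ : R < 1) :
    ∫ t in Ioo (R ^ 2) R, t⁻¹ / logRatio R t ^ 2 = 1 - (logRatio R R)⁻¹ := by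
  have hle : R ^ 2 ≤ R := sq_le hR₀.le hR₁.le
  rw [← integral_Ioc_eq_integral_Ioo, ← intervalIntegral.integral_of_le hle,
    intervalIntegral.integral_eq_sub_of_hasDerivAt
      (fun t ht => hasDerivAt_neg_inv_logRatio hR₀.ne' (uIcc_of_le hle ▸ ht).1)
      (((continuousOn_inv_div_logRatio_sq hR₀.ne').mono
        (uIcc_of_le hle ▸ Icc_subset_Ici_self)).intervalIntegrable),
    logRatio_sq hR₀.ne']
  ring

lemma integral_hessian_le (hR₀ : 0 < R) (hR₁ : R < 1) :
    ∫ t in Ioo (R ^ 2) R, (|deriv (deriv (tauR R)) t| ^ 2 + |deriv (tauR R) t / t| ^ 2) * t ^ 3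
      ≤ 5 / scale R ^ 2 := by
  have hpos : ∀ t ∈ Ioo (R ^ 2) R, 0 < t := fun t ht => (pow_pos hR₀ 2).trans ht.1
  calc ∫ t in Ioo (R ^ 2) R, (|deriv (deriv (tauR R)) t| ^ 2 + |deriv (tauR R) t / t| ^ 2) * t ^ 3
      ≤ ∫ t in Ioo (R ^ 2) R, 5 / scale R ^ 2 * (t⁻¹ / logRatio R t ^ 2) :=
        integral_mono_of_nonneg
          (ae_restrict_of_forall_mem measurableSet_Ioo fun t ht =>
            have := hpos t ht; by positivity)
          ((integrableOn_inv_div_logRatio_sq hR₀.ne').const_mul _)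
          (ae_restrict_of_forall_mem measurableSet_Ioo fun t ht => hessian_integrand_le hR₀ hR₁ ht)
    _ = 5 / scale R ^ 2 * (1 - (logRatio R R)⁻¹) := by
        rw [integral_const_mul, integral_inv_div_logRatio_sq hR₀ hR₁]
    _ ≤ 5 / scale R ^ 2 := by
        refine mul_le_of_le_one_right (by positivity) (sub_le_self _ (inv_nonneg.2 ?_))
        exact zero_le_one.trans (one_le_logRatio hR₀.ne' (sq_le hR₀.le hR₁.le))

lemma tendsto_integral_hessian :
    Tendsto (fun R => ∫ t in Ioo (R ^ 2) R,
        (|deriv (deriv (tauR R)) t| ^ 2 + |deriv (tauR R) t / t| ^ 2) * t ^ 3)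
      (𝓝[>] 0) (𝓝 0) := by
  refine tendsto_of_tendsto_of_tendsto_of_le_of_le' tendsto_const_nhds (tendsto_div_scale_sq 5)
    ?_ ?_ <;> filter_upwards [Ioo_mem_nhdsGT zero_lt_one] with R hR
  · exact setIntegral_nonneg measurableSet_Ioo fun t ht =>
      have := (pow_pos hR.1 2).trans ht.1; by positivity
  · exact integral_hessian_le hR.1 hR.2

lemma shellRadius_pos (hR : R ≠ 0) (j : ℕ) : 0 < shellRadius R j := by
  unfold shellRadius
  positivity

lemma subset_iUnion_shell (hR : R ≠ 0) : {x : ℝ⁴ | R ^ 2 ≤ ‖x‖} ⊆ ⋃ j, shell R j := by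
  intro x hx
  have hR2 : 0 < R ^ 2 := by positivity
  obtain ⟨j, hj, hj'⟩ :=
    exists_nat_pow_near ((one_le_div hR2).2 hx) (Real.one_lt_exp_iff.2 one_pos)
  exact mem_iUnion.2 ⟨j, (le_div_iff₀' hR2).1 hj, (div_lt_iff₀' hR2).1 hj'⟩

lemma deriv_tauR_le (hR₀ : 0 < R) (hR₁ : R < 1) (ht : t ∈ Ioo (R ^ 2) R) {j : ℕ}
    (hj : shellRadius R j ≤ t) :
    deriv (tauR R) t ≤ (scale R * shellRadius R j * (j + 1))⁻¹ := by
  have hr := shellRadius_pos hR₀.ne' j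
  have hL : (j + 1 : ℝ) ≤ logRatio R t := logRatio_shellRadius hR₀.ne' j ▸
    monotoneOn_logRatio hR₀.ne' hr (hr.trans_le hj) hj
  have hc := scale_pos hR₀ hR₁
  have ht₀ := hr.trans_le hj
  rw [deriv_tauR hR₀.ne' ht]
  exact inv_anti₀ (by positivity) (mul_le_mul (by gcongr) hL (by positivity) (by positivity))

lemma volume_shell_le (j : ℕ) :
    volume (shell R j)
      ≤ ENNReal.ofReal (shellRadius R (j + 1) ^ 4) * volume (Metric.closedBall (0 : ℝ⁴) 1) := by
  calc volume (shell R j) ≤ volume (Metric.closedBall (0 : ℝ⁴) (shellRadius R (j + 1))) :=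
        measure_mono fun x hx => mem_closedBall_zero_iff.2 hx.2.le
    _ = _ := by
        rw [Measure.addHaar_closedBall' _ _ (by unfold shellRadius; positivity)]
        simp

lemma shell_contribution_eq (hR₀ : 0 < R) (hR₁ : R < 1) (j : ℕ) :
    (scale R * shellRadius R j * (j + 1))⁻¹ ^ 2 / 2 * shellRadius R (j + 1) ^ 2
      = Real.exp 1 ^ 2 / 2 / scale R ^ 2 * ((j + 1 : ℝ) ^ 2)⁻¹ := by
  have hc := (scale_pos hR₀ hR₁).ne'
  have hR := hR₀.ne'
  unfold shellRadius
  field_simp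
  ring

lemma tsum_inv_succ_sq_ne_top : ∑' j : ℕ, ENNReal.ofReal ((j + 1 : ℝ) ^ 2)⁻¹ ≠ ⊤ := by
  have hsum : Summable fun j : ℕ => ((j + 1 : ℝ) ^ 2)⁻¹ := by
    simpa using (summable_nat_add_iff 1).2 (Real.summable_nat_pow_inv.2 one_lt_two)
  rw [← ENNReal.ofReal_tsum_of_nonneg (fun j => by positivity) hsum]
  exact ENNReal.ofReal_ne_top

lemma lintegral_level_sets_le (hR₀ : 0 < R) (hR₁ : R < 1) :
    ∫⁻ l in Ioi 0, ENNReal.ofReal l *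
        volume {x : ℝ⁴ | R ^ 2 < ‖x‖ ∧ ‖x‖ < R ∧ l < deriv (tauR R) ‖x‖} ^ ((1 : ℝ) / 2)
      ≤ ENNReal.ofReal (Real.exp 1 ^ 2 / 2 / scale R ^ 2) *
          ((∑' j : ℕ, ENNReal.ofReal ((j + 1 : ℝ) ^ 2)⁻¹) *
            volume (Metric.closedBall (0 : ℝ⁴) 1) ^ ((1 : ℝ) / 2)) := by
  set V := volume (Metric.closedBall (0 : ℝ⁴) 1)
  have hc := scale_pos hR₀ hR₁
  have hr := shellRadius_pos hR₀.ne'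
  calc _ ≤ ∑' j, ENNReal.ofReal ((scale R * shellRadius R j * (j + 1))⁻¹ ^ 2 / 2) *
          volume (shell R j) ^ ((1 : ℝ) / 2) := by
        refine lintegral_ofReal_mul_measure_rpow_le_tsum _ (by norm_num) (by norm_num) _ _
          (fun j => by have := hr j; positivity) (fun l x hx => subset_iUnion_shell hR₀.ne' hx.1.le)
          fun l j hl => disjoint_left.2 fun x hx hxj => ?_
        exact (hx.2.2.trans_le (deriv_tauR_le hR₀ hR₁ ⟨hx.1, hx.2.1⟩ hxj.1)).not_ge hl
    _ ≤ ∑' j, ENNReal.ofReal ((scale R * shellRadius R j * (j + 1))⁻¹ ^ 2 / 2) *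
          (ENNReal.ofReal (shellRadius R (j + 1) ^ 4) * V) ^ ((1 : ℝ) / 2) := by
        gcongr with j
        exact volume_shell_le j
    _ = ∑' j : ℕ, ENNReal.ofReal (Real.exp 1 ^ 2 / 2 / scale R ^ 2) *
          (ENNReal.ofReal ((j + 1 : ℝ) ^ 2)⁻¹ * V ^ ((1 : ℝ) / 2)) := by
        refine tsum_congr fun j => ?_
        have hsqrt : ENNReal.ofReal (shellRadius R (j + 1) ^ 4) ^ ((1 : ℝ) / 2)
            = ENNReal.ofReal (shellRadius R (j + 1) ^ 2) := by
          rw [ENNReal.ofReal_rpow_of_nonneg (by have := hr (j + 1); positivity) (by norm_num),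
            ← Real.rpow_natCast, ← Real.rpow_mul (hr (j + 1)).le]
          norm_num
        rw [ENNReal.mul_rpow_of_nonneg _ _ (by norm_num), hsqrt, ← mul_assoc, ← mul_assoc,
          ← ENNReal.ofReal_mul (by positivity), shell_contribution_eq hR₀ hR₁,
          ENNReal.ofReal_mul (by positivity)]
    _ = _ := by rw [ENNReal.tsum_mul_left, ENNReal.tsum_mul_right]

lemma tendsto_lintegral_level_sets :
    Tendsto (fun R => ∫⁻ l in Ioi 0, ENNReal.ofReal l *
        volume {x : ℝ⁴ | R ^ 2 < ‖x‖ ∧ ‖x‖ < R ∧ l < deriv (tauR R) ‖x‖} ^ ((1 : ℝ) / 2))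
      (𝓝[>] 0) (𝓝 0) := by
  have hball : volume (Metric.closedBall (0 : ℝ⁴) 1) ^ ((1 : ℝ) / 2) ≠ ⊤ :=
    ENNReal.rpow_ne_top_of_nonneg (by norm_num) measure_closedBall_lt_top.ne
  have hbound := ENNReal.Tendsto.mul_const
    (ENNReal.tendsto_ofReal (tendsto_div_scale_sq (Real.exp 1 ^ 2 / 2)))
    (Or.inr (ENNReal.mul_ne_top tsum_inv_succ_sq_ne_top hball))
  rw [ENNReal.ofReal_zero, zero_mul] at hbound
  refine tendsto_of_tendsto_of_tendsto_of_le_of_le' tendsto_const_nhds hbound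
    (Eventually.of_forall fun _ => bot_le) ?_
  filter_upwards [Ioo_mem_nhdsGT zero_lt_one] with R hR
  exact lintegral_level_sets_le hR.1 hR.2

end LogCutoff

theorem cutoff_properties :
    (∀ R ∈ Set.Ioo (0 : ℝ) 1,
      ContinuousOn (tauR R) (Set.Ici 0) ∧ MonotoneOn (tauR R) (Set.Ici 0) ∧
        ∀ t ∈ Set.Ici (0 : ℝ), 0 ≤ tauR R t ∧ tauR R t ≤ 1) ∧
    Filter.Tendsto (fun R : ℝ =>
        ∫ t in Set.Ioo (R ^ 2) R,
          (|deriv (deriv (tauR R)) t| ^ 2 + |deriv (tauR R) t / t| ^ 2) * t ^ 3)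
      (nhdsWithin 0 (Set.Ioi 0)) (nhds 0) ∧
    Filter.Tendsto (fun R : ℝ =>
        ∫⁻ l in Set.Ioi (0 : ℝ),
          ENNReal.ofReal l *
            (volume {x : EuclideanSpace ℝ (Fin 4) |
              R ^ 2 < ‖x‖ ∧ ‖x‖ < R ∧ l < deriv (tauR R) ‖x‖}) ^ ((1 : ℝ) / 2))
      (nhdsWithin 0 (Set.Ioi 0)) (nhds (0 : ℝ≥0∞)) :=
  ⟨fun _ hR => ⟨(LogCutoff.continuous_tauR hR.1 hR.2).continuousOn,
      (LogCutoff.monotone_tauR hR.1 hR.2).monotoneOn _,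
      fun t _ => LogCutoff.tauR_mem_Icc hR.1 hR.2 t⟩,
    LogCutoff.tendsto_integral_hessian, LogCutoff.tendsto_lintegral_level_sets⟩
end
end
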